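/- Let H : ℝ² → ℝ be C³ and let (q,p) : ℝ → ℝ² be differentiable with q′(t) = ∂H/∂p(q(t),p(t)) and p′(t) = −∂H/∂q(q(t),p(t)) for all t. Fix t₀ ∈ ℝ. Then as h → 0 the trapezoidal DVI (TDVI) residuals are O(h³): (i) q(t₀+h) − q(t₀) − (h/2)·[∂H/∂p(q(t₀), p(t₀+h/2)) + ∂H/∂p(q(t₀+h), p(t₀+h/2))] = O(h³); and (ii) p(t₀+h/2) − p(t₀−h/2) + (h/2)·[∂H/∂q(q(t₀), p(t₀+h/2)) + ∂H/∂q(q(t₀), p(t₀−h/2))] = O(h³). Hence the trapezoidal DVI scheme is second-order accurate. -/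

import Mathlib

open Asymptotics Topology

noncomputable section

/-- `∂H/∂q` at a point of the plane. -/
def Hq (H : ℝ × ℝ → ℝ) (z : ℝ × ℝ) : ℝ := fderiv ℝ H z (1, 0)

/-- `∂H/∂p` at a point of the plane. -/
def Hp (H : ℝ × ℝ → ℝ) (z : ℝ × ℝ) : ℝ := fderiv ℝ H z (0, 1)

/-!
Along the exact solution write `b = ∂H/∂p (q t₀, p t₀)` and let `b'` be its derivative along the
flow. Then `q (t₀ + h) - q t₀ = h b + h² b' / 2 + O(h³)`, while the trapezoidal sum of `∂H/∂p` at
`(q t₀, p (t₀ + h/2))` and `(q (t₀ + h), p (t₀ + h/2))` is `2 b + h b' + O(h²)`: the two evaluation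
points move with velocities adding up to the Hamiltonian vector field, so their first-order terms
add up to `h b'`. For the momentum update, `p (t₀ + h/2) - p (t₀ - h/2)` is odd in `h`, so it has no
`h²` term, and the two evaluation points `(q t₀, p (t₀ ± h/2))` move with opposite velocities, so
the trapezoidal sum has no `h` term. Every expansion is a Taylor estimate with `O` remainder,
obtained from the mean value inequality.
-/

section Taylor

variable {E : Type*} [NormedAddCommGroup E] [NormedSpace ℝ E]

theorem isBigO_pow_succ_of_hasDerivAt {f f' : ℝ → E} {n : ℕ} (hf0 : f 0 = 0)
    (hf : ∀ s, HasDerivAt f (f' s) s) (hf' : f' =O[𝓝 0] (· ^ n)) :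
    f =O[𝓝 0] (· ^ (n + 1)) := by
  obtain ⟨C, hC0, hC⟩ := hf'.exists_pos
  obtain ⟨ε, hε, hball⟩ := Metric.eventually_nhds_iff_ball.mp hC.bound
  refine .of_bound C (Filter.eventually_of_mem (Metric.ball_mem_nhds 0 hε) fun h hh => ?_)
  have hbound : ∀ s ∈ Set.uIcc 0 h, ‖f' s‖ ≤ C * |h| ^ n := fun s hs => by
    have hs : |s| ≤ |h| := by simpa using Set.abs_sub_left_of_mem_uIcc hs
    calc ‖f' s‖ ≤ C * |s| ^ n := by
          simpa using hball s (by simpa using hs.trans_lt (by simpa using hh))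
      _ ≤ C * |h| ^ n := by gcongr
  have := (convex_uIcc 0 h).norm_image_sub_le_of_norm_hasDerivWithin_le
    (fun s _ => (hf s).hasDerivWithinAt) hbound Set.left_mem_uIcc Set.right_mem_uIcc
  simpa [hf0, pow_succ, mul_assoc] using this

theorem isBigO_taylor_sq {g g' : ℝ → E} (hg : ∀ s, HasDerivAt g (g' s) s)
    (hg' : DifferentiableAt ℝ g' 0) :
    (fun h => g h - g 0 - h • g' 0) =O[𝓝 0] (· ^ 2) :=
  isBigO_pow_succ_of_hasDerivAt (f' := fun h => g' h - g' 0) (by simp)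
    (fun s => by simpa using ((hg s).sub_const (g 0)).fun_sub ((hasDerivAt_id s).smul_const (g' 0)))
    (by simpa using hg'.isBigO_sub)

theorem isBigO_taylor_cube {g g' : ℝ → E} {v : E} (hg : ∀ s, HasDerivAt g (g' s) s)
    (hg' : (fun h => g' h - g' 0 - h • v) =O[𝓝 0] (· ^ 2)) :
    (fun h => g h - g 0 - h • g' 0 - (h ^ 2 / 2) • v) =O[𝓝 0] (· ^ 3) := by
  refine isBigO_pow_succ_of_hasDerivAt (by simp) (fun s => ?_) hg'
  have hsq : HasDerivAt (fun h : ℝ => (h ^ 2 / 2) • v) (s • v) s := by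
    simpa using ((hasDerivAt_pow 2 s).div_const 2).smul_const v
  simpa using (((hg s).sub_const (g 0)).fun_sub ((hasDerivAt_id s).smul_const (g' 0))).fun_sub hsq

theorem isBigO_trapezoid_residual_of_taylor {Q G : ℝ → E} {c₁ c₂ : E}
    (hQ : (fun h => Q h - Q 0 - h • c₁ - (h ^ 2 / 2) • c₂) =O[𝓝 0] (· ^ 3))
    (hG : (fun h => G h - (2 : ℝ) • c₁ - h • c₂) =O[𝓝 0] (· ^ 2)) :
    (fun h => Q h - Q 0 - (h / 2) • G h) =O[𝓝 0] (· ^ 3) := by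
  have hhG : (fun h => h • (G h - (2 : ℝ) • c₁ - h • c₂)) =O[𝓝 0] (· ^ 3) :=
    ((isBigO_refl (fun h : ℝ => h) _).smul hG).congr_right fun h => by simp; ring
  refine (hQ.sub (hhG.const_smul_left (1 / 2 : ℝ))).congr_left fun h => ?_
  simp only [Pi.smul_apply]
  module

end Taylor

theorem ContDiff.isBigO_comp_curve_taylor {E F : Type*} [NormedAddCommGroup E] [NormedSpace ℝ E]
    [NormedAddCommGroup F] [NormedSpace ℝ F] {f : E → F} (hf : ContDiff ℝ 2 f) {c c' : ℝ → E}
    (hc : ∀ s, HasDerivAt c (c' s) s) (hc' : DifferentiableAt ℝ c' 0) :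
    (fun h => f (c h) - f (c 0) - h • fderiv ℝ f (c 0) (c' 0)) =O[𝓝 0] (· ^ 2) :=
  isBigO_taylor_sq
    (fun s => (hf.differentiable two_ne_zero (c s)).hasFDerivAt.comp_hasDerivAt s (hc s))
    ((((hf.fderiv_right one_add_one_eq_two.le).differentiable one_ne_zero (c 0)).comp 0
      (hc 0).differentiableAt).clm_apply hc')

theorem contDiff_Hp {n : WithTop ℕ∞} {H : ℝ × ℝ → ℝ} (hH : ContDiff ℝ (n + 1) H) :
    ContDiff ℝ n (Hp H) :=
  (hH.fderiv_right le_rfl).clm_apply contDiff_const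

theorem contDiff_Hq {n : WithTop ℕ∞} {H : ℝ × ℝ → ℝ} (hH : ContDiff ℝ (n + 1) H) :
    ContDiff ℝ n (Hq H) :=
  (hH.fderiv_right le_rfl).clm_apply contDiff_const

section Staggered

variable {E : Type*} [NormedAddCommGroup E] [NormedSpace ℝ E] {H : ℝ × ℝ → ℝ} {q p : ℝ → ℝ}

theorem hasDerivAt_staggered (hq : ∀ t, HasDerivAt q (Hp H (q t, p t)) t)
    (hp : ∀ t, HasDerivAt p (-Hq H (q t, p t)) t) (t₀ α β h : ℝ) :
    HasDerivAt (fun s => (q (t₀ + α * s), p (t₀ + β * s)))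
      (Hp H (q (t₀ + α * h), p (t₀ + α * h)) * α,
        -Hq H (q (t₀ + β * h), p (t₀ + β * h)) * β) h := by
  have hlin (γ : ℝ) : HasDerivAt (fun s => t₀ + γ * s) γ h := by
    simpa using ((hasDerivAt_id h).const_mul γ).const_add t₀
  exact ((hq _).comp h (hlin α)).prodMk ((hp _).comp h (hlin β))

theorem isBigO_staggered_taylor (hq : ∀ t, HasDerivAt q (Hp H (q t, p t)) t)
    (hp : ∀ t, HasDerivAt p (-Hq H (q t, p t)) t) (hHp : Differentiable ℝ (Hp H))
    (hHq : Differentiable ℝ (Hq H)) {F : ℝ × ℝ → E} (hF : ContDiff ℝ 2 F) (t₀ α β : ℝ) :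
    (fun h => F (q (t₀ + α * h), p (t₀ + β * h)) - F (q t₀, p t₀)
        - h • fderiv ℝ F (q t₀, p t₀) (Hp H (q t₀, p t₀) * α, -Hq H (q t₀, p t₀) * β))
      =O[𝓝 0] (· ^ 2) := by
  have hqd : Differentiable ℝ q := fun t => (hq t).differentiableAt
  have hpd : Differentiable ℝ p := fun t => (hp t).differentiableAt
  have hderiv : Differentiable ℝ fun h => (Hp H (q (t₀ + α * h), p (t₀ + α * h)) * α,
      -Hq H (q (t₀ + β * h), p (t₀ + β * h)) * β) := by
    fun_prop
  simpa using hF.isBigO_comp_curve_taylor (hasDerivAt_staggered hq hp t₀ α β) (hderiv 0)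

theorem isBigO_staggered_add_taylor (hq : ∀ t, HasDerivAt q (Hp H (q t, p t)) t)
    (hp : ∀ t, HasDerivAt p (-Hq H (q t, p t)) t) (hHp : Differentiable ℝ (Hp H))
    (hHq : Differentiable ℝ (Hq H)) {F : ℝ × ℝ → E} (hF : ContDiff ℝ 2 F)
    {t₀ α₁ α₂ α β₁ β₂ β : ℝ} (hα : α₁ + α₂ = α) (hβ : β₁ + β₂ = β) :
    (fun h => F (q (t₀ + α₁ * h), p (t₀ + β₁ * h)) + F (q (t₀ + α₂ * h), p (t₀ + β₂ * h))
        - (2 : ℝ) • F (q t₀, p t₀)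
        - h • fderiv ℝ F (q t₀, p t₀) (Hp H (q t₀, p t₀) * α, -Hq H (q t₀, p t₀) * β))
      =O[𝓝 0] (· ^ 2) := by
  refine ((isBigO_staggered_taylor hq hp hHp hHq hF t₀ α₁ β₁).add
    (isBigO_staggered_taylor hq hp hHp hHq hF t₀ α₂ β₂)).congr_left fun h => ?_
  have hv : (Hp H (q t₀, p t₀) * α, -Hq H (q t₀, p t₀) * β)
      = (Hp H (q t₀, p t₀) * α₁, -Hq H (q t₀, p t₀) * β₁)
        + (Hp H (q t₀, p t₀) * α₂, -Hq H (q t₀, p t₀) * β₂) := by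
    ext <;> simp only [Prod.fst_add, Prod.snd_add, ← hα, ← hβ] <;> ring
  rw [hv, map_add]
  module

end Staggered

theorem tdvi_q_residual_isBigO {H : ℝ × ℝ → ℝ} {q p : ℝ → ℝ}
    (hq : ∀ t, HasDerivAt q (Hp H (q t, p t)) t) (hp : ∀ t, HasDerivAt p (-Hq H (q t, p t)) t)
    (hHp : ContDiff ℝ 2 (Hp H)) (hHq : Differentiable ℝ (Hq H)) (t₀ : ℝ) :
    (fun h : ℝ => q (t₀ + h) - q t₀
        - h / 2 * (Hp H (q t₀, p (t₀ + h / 2)) + Hp H (q (t₀ + h), p (t₀ + h / 2))))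
      =O[𝓝 0] (· ^ 3) := by
  have hHp' := hHp.differentiable two_ne_zero
  have hb := isBigO_staggered_taylor hq hp hHp' hHq hHp t₀ 1 1
  have hG := isBigO_staggered_add_taylor hq hp hHp' hHq hHp (t₀ := t₀)
    (α₁ := 0) (α₂ := 1) (β₁ := 1 / 2) (β₂ := 1 / 2) (α := 1) (β := 1) (by norm_num) (by norm_num)
  simp only [one_div, inv_mul_eq_div, zero_mul, add_zero, one_mul, mul_one] at hb hG
  have hQ := isBigO_taylor_cube (g := fun h => q (t₀ + h))
    (fun s => by simpa using (hq (t₀ + s)).comp_const_add t₀ s) (by simpa using hb)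
  simpa using isBigO_trapezoid_residual_of_taylor hQ (by simpa using hG)

theorem tdvi_p_residual_isBigO {H : ℝ × ℝ → ℝ} {q p : ℝ → ℝ}
    (hq : ∀ t, HasDerivAt q (Hp H (q t, p t)) t) (hp : ∀ t, HasDerivAt p (-Hq H (q t, p t)) t)
    (hHp : Differentiable ℝ (Hp H)) (hHq : ContDiff ℝ 2 (Hq H)) (t₀ : ℝ) :
    (fun h : ℝ => p (t₀ + h / 2) - p (t₀ - h / 2)
        + h / 2 * (Hq H (q t₀, p (t₀ + h / 2)) + Hq H (q t₀, p (t₀ - h / 2))))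
      =O[𝓝 0] (· ^ 3) := by
  have hHq' := hHq.differentiable two_ne_zero
  have hsym := isBigO_staggered_add_taylor hq hp hHp hHq' hHq (t₀ := t₀)
    (α₁ := 1 / 2) (α₂ := -(1 / 2)) (β₁ := 1 / 2) (β₂ := -(1 / 2)) (α := 0) (β := 0)
    (by norm_num) (by norm_num)
  have hG := isBigO_staggered_add_taylor hq hp hHp hHq' hHq (t₀ := t₀)
    (α₁ := 0) (α₂ := 0) (β₁ := 1 / 2) (β₂ := -(1 / 2)) (α := 0) (β := 0)
    (by norm_num) (by norm_num)
  simp only [one_div, inv_mul_eq_div, neg_mul, ← sub_eq_add_neg, zero_mul, add_zero, mul_zero,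
    Prod.mk_zero_zero, map_zero, smul_zero, sub_zero] at hsym hG
  have hQ := isBigO_taylor_cube (g := fun h => p (t₀ + h / 2) - p (t₀ - h / 2))
    (g' := fun h => -(Hq H (q (t₀ + h / 2), p (t₀ + h / 2))
      + Hq H (q (t₀ - h / 2), p (t₀ - h / 2))) / 2) (v := 0)
    (fun s => (((hp _).comp s (((hasDerivAt_id s).div_const 2).const_add t₀)).sub
      ((hp _).comp s (((hasDerivAt_id s).div_const 2).const_sub t₀))).congr_deriv (by simp; ring))
    ((hsym.const_mul_left (-1 / 2)).congr_left fun h => by simp; ring)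
  refine (isBigO_trapezoid_residual_of_taylor hQ
    (G := fun h => -(Hq H (q t₀, p (t₀ + h / 2)) + Hq H (q t₀, p (t₀ - h / 2))))
    (hG.neg_left.congr_left fun h => by simp; ring)).congr_left fun h => ?_
  simp
  ring

/-- The trapezoidal DVI scheme is second-order accurate: along an exact solution of
Hamilton's equations the TDVI residuals are `O(h³)` as `h → 0`. -/
theorem tdvi_second_order_accurate
    (H : ℝ × ℝ → ℝ) (hH : ContDiff ℝ 3 H)
    (q p : ℝ → ℝ)
    (hq : ∀ t : ℝ, HasDerivAt q (Hp H (q t, p t)) t)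
    (hp : ∀ t : ℝ, HasDerivAt p (-Hq H (q t, p t)) t)
    (t₀ : ℝ) :
    ((fun h : ℝ =>
        q (t₀ + h) - q t₀
          - h / 2 * (Hp H (q t₀, p (t₀ + h / 2)) + Hp H (q (t₀ + h), p (t₀ + h / 2))))
      =O[𝓝 (0 : ℝ)] fun h : ℝ => h ^ 3)
    ∧ ((fun h : ℝ =>
        p (t₀ + h / 2) - p (t₀ - h / 2)
          + h / 2 * (Hq H (q t₀, p (t₀ + h / 2)) + Hq H (q t₀, p (t₀ - h / 2))))
      =O[𝓝 (0 : ℝ)] fun h : ℝ => h ^ 3) :=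
  ⟨tdvi_q_residual_isBigO hq hp (contDiff_Hp hH) ((contDiff_Hq hH).differentiable two_ne_zero) t₀,
    tdvi_p_residual_isBigO hq hp ((contDiff_Hp hH).differentiable two_ne_zero) (contDiff_Hq hH) t₀⟩
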